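/- Let A = {-2^{b-1}, ..., 2^{b-1}-1} for an integer b ≥ 1, q > 0, α > 0. The map θ ↦ Q_d(θ) = Σ_{i∈A} iq · P_α(iq|θ) is strictly increasing on ℝ. -/

import Mathlib

open Finset

noncomputable def softPMF (A : Finset ℤ) (q α θ : ℝ) (i : ℤ) : ℝ :=
  Real.exp (-α * (θ - i * q) ^ 2) / ∑ j ∈ A, Real.exp (-α * (θ - j * q) ^ 2)

noncomputable def softQuant (A : Finset ℤ) (q α θ : ℝ) : ℝ :=
  ∑ i ∈ A, (i * q) * softPMF A q α θ i

/-!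
`Q_d(θ)` is the mean of `i ↦ i q` under Gaussian weights `w_θ(i) = exp(-α(θ - iq)²)`.
For `θ₁ < θ₂` the weights satisfy `w_{θ₂}(i) = g(i) w_{θ₁}(i)` with `g` an exponential in `i`,
increasing since `αq > 0`; tilting a distribution by an increasing factor raises the mean of
an increasing function (a strict weighted Chebyshev sum inequality), which follows from
`∑ᵢ∑ⱼ (xᵢ - xⱼ)(gᵢ - gⱼ) wᵢ wⱼ > 0`.
-/

noncomputable def weightedMean {ι : Type*} (s : Finset ι) (w x : ι → ℝ) : ℝ :=
  (∑ i ∈ s, x i * w i) / ∑ i ∈ s, w i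

section Chebyshev

variable {ι : Type*}

lemma sum_sum_sub_mul_sub_mul_mul (s : Finset ι) (x g w : ι → ℝ) :
    ∑ i ∈ s, ∑ j ∈ s, (x i - x j) * (g i - g j) * (w i * w j)
      = 2 * ((∑ i ∈ s, x i * (g i * w i)) * ∑ i ∈ s, w i
          - (∑ i ∈ s, x i * w i) * ∑ i ∈ s, g i * w i) := by
  have hexpand : ∀ i j, (x i - x j) * (g i - g j) * (w i * w j)
      = x i * (g i * w i) * w j + x j * (g j * w j) * w i
        - x i * w i * (g j * w j) - x j * w j * (g i * w i) := fun i j => by ring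
  simp only [hexpand, sum_add_distrib, sum_sub_distrib, ← mul_sum, ← sum_mul]
  ring

lemma sub_mul_sub_pos_of_strictMono [LinearOrder ι] {x g : ι → ℝ} (hx : StrictMono x)
    (hg : StrictMono g) {i j : ι} (hij : i ≠ j) : 0 < (x i - x j) * (g i - g j) := by
  rcases hij.lt_or_gt with h | h
  · exact mul_pos_of_neg_of_neg (sub_neg.2 (hx h)) (sub_neg.2 (hg h))
  · exact mul_pos (sub_pos.2 (hx h)) (sub_pos.2 (hg h))

lemma sum_mul_sum_lt_sum_mul_sum_of_strictMono [LinearOrder ι] {s : Finset ι}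
    (hs : s.Nontrivial) {x g w : ι → ℝ} (hx : StrictMono x) (hg : StrictMono g)
    (hw : ∀ i ∈ s, 0 < w i) :
    (∑ i ∈ s, x i * w i) * ∑ i ∈ s, g i * w i
      < (∑ i ∈ s, x i * (g i * w i)) * ∑ i ∈ s, w i := by
  have hterm : ∀ i ∈ s, ∀ j ∈ s, 0 ≤ (x i - x j) * (g i - g j) * (w i * w j) := by
    intro i hi j hj
    rcases eq_or_ne i j with rfl | hij
    · simp
    · exact (mul_pos (sub_mul_sub_pos_of_strictMono hx hg hij) (mul_pos (hw i hi) (hw j hj))).le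
  obtain ⟨i, hi, j, hj, hij⟩ := hs
  have hpos : 0 < ∑ i ∈ s, ∑ j ∈ s, (x i - x j) * (g i - g j) * (w i * w j) :=
    sum_pos' (fun i hi => sum_nonneg (hterm i hi)) ⟨i, hi, sum_pos' (hterm i hi)
      ⟨j, hj, mul_pos (sub_mul_sub_pos_of_strictMono hx hg hij) (mul_pos (hw i hi) (hw j hj))⟩⟩
  rw [sum_sum_sub_mul_sub_mul_mul] at hpos
  linarith

lemma weightedMean_lt_weightedMean_mul [LinearOrder ι] {s : Finset ι} (hs : s.Nontrivial)
    {x g w : ι → ℝ} (hx : StrictMono x) (hg : StrictMono g) (hg₀ : ∀ i ∈ s, 0 < g i)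
    (hw : ∀ i ∈ s, 0 < w i) :
    weightedMean s w x < weightedMean s (fun i => g i * w i) x := by
  have hW : 0 < ∑ i ∈ s, w i := sum_pos hw hs.nonempty
  have hgW : 0 < ∑ i ∈ s, g i * w i :=
    sum_pos (fun i hi => mul_pos (hg₀ i hi) (hw i hi)) hs.nonempty
  rw [weightedMean, weightedMean, div_lt_div_iff₀ hW hgW]
  exact sum_mul_sum_lt_sum_mul_sum_of_strictMono hs hx hg hw

end Chebyshev

noncomputable def gaussWeight (q α θ : ℝ) (i : ℤ) : ℝ := Real.exp (-α * (θ - i * q) ^ 2)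

lemma softQuant_eq_weightedMean (A : Finset ℤ) (q α θ : ℝ) :
    softQuant A q α θ = weightedMean A (gaussWeight q α θ) (fun i => i * q) := by
  simp only [softQuant, softPMF, weightedMean, gaussWeight, sum_div, mul_div_assoc]

lemma gaussWeight_eq_mul_gaussWeight (q α θ₁ θ₂ : ℝ) (i : ℤ) :
    gaussWeight q α θ₂ i
      = Real.exp (α * (θ₁ ^ 2 - θ₂ ^ 2) + 2 * α * (θ₂ - θ₁) * q * i) * gaussWeight q α θ₁ i := by
  rw [gaussWeight, gaussWeight, ← Real.exp_add]
  ring_nf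

theorem softQuant_strictMono_general (b : ℕ) (q α : ℝ)
    (hq : 0 < q) (hα : 0 < α) :
    StrictMono (fun θ =>
      softQuant (Finset.Icc (-(2 ^ (b - 1)) : ℤ) (2 ^ (b - 1) - 1)) q α θ) := by
  intro θ₁ θ₂ hθ
  have hA : (Finset.Icc (-(2 ^ (b - 1)) : ℤ) (2 ^ (b - 1) - 1)).Nontrivial :=
    ⟨-(2 ^ (b - 1)), by simp, 2 ^ (b - 1) - 1, by simp, by lia⟩
  have hslope : 0 < 2 * α * (θ₂ - θ₁) * q := by
    have := sub_pos.2 hθ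
    positivity
  have htilt : StrictMono fun i : ℤ =>
      Real.exp (α * (θ₁ ^ 2 - θ₂ ^ 2) + 2 * α * (θ₂ - θ₁) * q * i) :=
    Real.exp_strictMono.comp fun i j hij => by
      have : (i : ℝ) < j := Int.cast_lt.2 hij
      nlinarith
  simp only [softQuant_eq_weightedMean, funext (gaussWeight_eq_mul_gaussWeight q α θ₁ θ₂)]
  exact weightedMean_lt_weightedMean_mul hA
    (fun i j hij => mul_lt_mul_of_pos_right (Int.cast_lt.2 hij) hq) htilt
    (fun _ _ => Real.exp_pos _) (fun _ _ => Real.exp_pos _)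

/-- For the `b`-bit index set `A = {-2^{b-1}, ..., 2^{b-1}-1}`, the soft
quantizer `θ ↦ Q_d(θ)` is strictly increasing on `ℝ`. -/
theorem softQuant_strictMono (b : ℕ) (hb : 1 ≤ b) (q α : ℝ)
    (hq : 0 < q) (hα : 0 < α) :
    StrictMono (fun θ =>
      softQuant (Finset.Icc (-(2 ^ (b - 1)) : ℤ) (2 ^ (b - 1) - 1)) q α θ) :=
  softQuant_strictMono_general b q α hq hα
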